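/- arXiv:2104.12281 — 2 statements merged into one kernel-verified Lean document; each statement's English description precedes it below -/
import Mathlib

section
/- Let G be a group with a descending chain of normal subgroups G = G_0 ≥ G_1 ≥ G_2 ≥ ... with ⋂_i G_i = 1, such that each G_{i-1}/G_i is abelian of exponent dividing a prime p_i, where the p_i are pairwise distinct. If every element of G has finite order, then for every positive integer m there exists n such that G_n ≤ G^m. -/
theorem chain_subgroup_le_power_subgroup {G : Type*} [Group G]
    (Gs : ℕ → Subgroup G) (p : ℕ → ℕ)
    (hnormal : ∀ i, (Gs i).Normal)
    (hdesc : ∀ i, Gs (i + 1) ≤ Gs i)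
    (h0 : Gs 0 = ⊤) (hinf : (⨅ i, Gs i) = ⊥)
    (hprime : ∀ i, 1 ≤ i → (p i).Prime)
    (hdistinct : ∀ i j, 1 ≤ i → 1 ≤ j → p i = p j → i = j)
    (hexp : ∀ i, ∀ x ∈ Gs i, x ^ p (i + 1) ∈ Gs (i + 1))
    (habel : ∀ i, ∀ x ∈ Gs i, ∀ y ∈ Gs i, x * y * x⁻¹ * y⁻¹ ∈ Gs (i + 1))
    (htor : ∀ g : G, IsOfFinOrder g) :
    ∀ m : ℕ, 0 < m → ∃ n : ℕ,
      Gs n ≤ Subgroup.closure {x : G | ∃ g : G, g ^ m = x} := by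
  classical
  intro m hm
  set H := Subgroup.closure {x : G | ∃ g : G, g ^ m = x} with hH
  have hpowH : ∀ g : G, g ^ m ∈ H := fun g => Subgroup.subset_closure ⟨g, rfl⟩
  have hant : Antitone Gs := antitone_nat_of_succ_le hdesc
  -- choose n beyond all indices whose prime divides m
  set f : ℕ → ℕ := fun q => if h : ∃ i, 1 ≤ i ∧ p i = q then h.choose else 0 with hf
  set n : ℕ := m.primeFactors.sup f with hn
  have hnprop : ∀ i, n < i → ¬ p i ∣ m := by
    intro i hi hdvd
    have hi1 : 1 ≤ i := by omega
    have hmem : p i ∈ m.primeFactors := by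
      rw [Nat.mem_primeFactors]
      exact ⟨hprime i hi1, hdvd, hm.ne'⟩
    have hex : ∃ j, 1 ≤ j ∧ p j = p i := ⟨i, hi1, rfl⟩
    have hspec := hex.choose_spec
    have hfi : f (p i) = hex.choose := by simp only [hf, dif_pos hex]
    have : hex.choose = i := hdistinct _ _ hspec.1 hi1 hspec.2
    have hle : f (p i) ≤ n := Finset.le_sup hmem
    omega
  refine ⟨n, fun x hx => ?_⟩
  -- the order of x is coprime to m
  have hxfin : orderOf x ≠ 0 := (htor x).orderOf_pos.ne'
  have hcop : Nat.Coprime (orderOf x) m := by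
    by_contra hnc
    obtain ⟨q, hq, hq1, hq2⟩ := Nat.Prime.not_coprime_iff_dvd.mp hnc
    set y := x ^ (orderOf x / q) with hy
    have hyo : orderOf y = q := orderOf_pow_orderOf_div hxfin hq1
    have hyn : y ∈ Gs n := Subgroup.pow_mem _ hx _
    have hyne : y ≠ 1 := by
      intro h
      rw [h, orderOf_one] at hyo
      exact hq.one_lt.ne' hyo.symm
    -- find a transition point
    have hj : ∃ j, n ≤ j ∧ y ∈ Gs j ∧ y ∉ Gs (j + 1) := by
      by_contra hc
      push_neg at hc
      have hall : ∀ k, y ∈ Gs (n + k) := by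
        intro k
        induction k with
        | zero => exact hyn
        | succ k ih => exact hc (n + k) (Nat.le_add_right _ _) ih
      have : y ∈ ⨅ i, Gs i := by
        rw [Subgroup.mem_iInf]
        intro j
        rcases le_or_gt j n with h | h
        · exact hant h hyn
        · have := hall (j - n)
          rwa [Nat.add_sub_cancel' h.le] at this
      rw [hinf] at this
      exact hyne this
    obtain ⟨j, hjn, hyj, hyj1⟩ := hj
    have hpj : y ^ p (j + 1) ∈ Gs (j + 1) := hexp j y hyj
    have hjp : (p (j + 1)).Prime := hprime (j + 1) (by omega)
    by_cases hqe : q = p (j + 1)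
    · exact hnprop (j + 1) (by omega) (hqe ▸ hq2)
    · have hcqp : Nat.Coprime (p (j + 1)) q :=
        (Nat.coprime_primes hjp hq).mpr (Ne.symm hqe)
      obtain ⟨k, -, hk⟩ := Nat.exists_mul_mod_eq_one_of_coprime hcqp hq.one_lt
      have : y = (y ^ p (j + 1)) ^ k := by
        rw [← pow_mul, ← pow_mod_orderOf, hyo, hk, pow_one]
      rw [this] at hyj1
      exact hyj1 (Subgroup.pow_mem _ hpj _)
  -- conclude x ∈ H
  rcases eq_or_lt_of_le (Nat.succ_le_of_lt (htor x).orderOf_pos) with h1 | h1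
  · have : x = 1 := orderOf_eq_one_iff.mp h1.symm
    rw [this]; exact Subgroup.one_mem _
  · obtain ⟨k, -, hk⟩ := Nat.exists_mul_mod_eq_one_of_coprime hcop.symm h1
    have : x = (x ^ k) ^ m := by
      rw [← pow_mul, mul_comm, ← pow_mod_orderOf, hk, pow_one]
    rw [this]
    exact hpowH _
end

section
/- Let G be a group generated by d elements and H a subgroup of finite index m. Then H can be generated by 1 + m(d − 1) elements; in particular, a subgroup of index m in a 2-generator group is generated by 1 + m elements. -/
open Subgroup
open scoped Pointwise

section aux

variable {G : Type*} [Group G] (H : Subgroup G) (S : Finset G)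

lemma exists_schreier_list [DecidableEq G] [H.FiniteIndex] (h1 : Subgroup.closure (S : Set G) = ⊤) :
    ∃ L : List G, (1:G) ∈ L ∧
      (∀ r₁ ∈ L, ∀ r₂ ∈ L, r₁ * r₂⁻¹ ∈ H → r₁ = r₂) ∧
      (∀ r ∈ L, r ≠ 1 → ∃ r' ∈ L, ∃ s ∈ S, (r = r' * s ∨ r = r' * s⁻¹) ∧
        L.idxOf r' < L.idxOf r) ∧
      (∀ g : G, ∃ r ∈ L, g * r⁻¹ ∈ H) := by
  classical
  haveI : Fintype (G ⧸ H) := H.fintypeQuotientOfFiniteIndex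
  haveI : Fintype (Quotient (QuotientGroup.rightRel H)) :=
    Fintype.ofEquiv (G ⧸ H) (QuotientGroup.quotientRightRelEquivQuotientLeftRel H).symm
  have key : ∀ n : ℕ, ∀ L : List G, (1:G) ∈ L →
      (∀ r₁ ∈ L, ∀ r₂ ∈ L, r₁ * r₂⁻¹ ∈ H → r₁ = r₂) →
      (∀ r ∈ L, r ≠ 1 → ∃ r' ∈ L, ∃ s ∈ S, (r = r' * s ∨ r = r' * s⁻¹) ∧
        L.idxOf r' < L.idxOf r) →
      (Finset.univ.filter
        (fun q : Quotient (QuotientGroup.rightRel H) =>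
          ¬ ∃ r ∈ L, Quotient.mk'' r = q)).card ≤ n →
      ∃ L' : List G, (1:G) ∈ L' ∧
        (∀ r₁ ∈ L', ∀ r₂ ∈ L', r₁ * r₂⁻¹ ∈ H → r₁ = r₂) ∧
        (∀ r ∈ L', r ≠ 1 → ∃ r' ∈ L', ∃ s ∈ S, (r = r' * s ∨ r = r' * s⁻¹) ∧
          L'.idxOf r' < L'.idxOf r) ∧
        (∀ g : G, ∃ r ∈ L', g * r⁻¹ ∈ H) := by
    intro n
    induction n with
    | zero =>
      intro L hL1 hLinj hLpre hcard
      refine ⟨L, hL1, hLinj, hLpre, fun g => ?_⟩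
      by_contra hg
      push_neg at hg
      have : (Quotient.mk'' g : Quotient (QuotientGroup.rightRel H)) ∈
          Finset.univ.filter (fun q => ¬ ∃ r ∈ L, Quotient.mk'' r = q) := by
        simp only [Finset.mem_filter, Finset.mem_univ, true_and]
        rintro ⟨r, hr, hrg⟩
        have : g * r⁻¹ ∈ H := by
          have := Quotient.exact' hrg
          rw [QuotientGroup.rightRel_apply] at this
          exact this
        exact hg r hr this
      have := Finset.card_pos.mpr ⟨_, this⟩
      omega
    | succ n ih =>
      intro L hL1 hLinj hLpre hcard
      by_cases hall : ∀ g : G, ∃ r ∈ L, g * r⁻¹ ∈ H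
      · exact ⟨L, hL1, hLinj, hLpre, hall⟩
      · -- find a new element g' = r*s^±1 in an unhit coset
        have hstep : ∃ g' : G, (∀ r ∈ L, g' * r⁻¹ ∉ H) ∧
            ∃ r ∈ L, ∃ s ∈ S, g' = r * s ∨ g' = r * s⁻¹ := by
          by_contra hcon
          push_neg at hcon
          apply hall
          intro g
          have hg : g ∈ Subgroup.closure (S : Set G) := h1 ▸ Subgroup.mem_top g
          induction hg using Subgroup.closure_induction_right with
          | one => exact ⟨1, hL1, by simpa using H.one_mem⟩
          | mul_right x hx s hs hih =>
            obtain ⟨r, hr, hxr⟩ := hih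
            have hrs : ∃ r₂ ∈ L, r * s * r₂⁻¹ ∈ H := by
              by_contra hno
              push_neg at hno
              exact (hcon (r * s) hno r hr s hs).1 rfl
            obtain ⟨r₂, hr₂, hmem⟩ := hrs
            refine ⟨r₂, hr₂, ?_⟩
            have : x * s * r₂⁻¹ = (x * r⁻¹) * (r * s * r₂⁻¹) := by group
            rw [this]
            exact H.mul_mem hxr hmem
          | mul_inv_cancel x hx s hs hih =>
            obtain ⟨r, hr, hxr⟩ := hih
            have hrs : ∃ r₂ ∈ L, r * s⁻¹ * r₂⁻¹ ∈ H := by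
              by_contra hno
              push_neg at hno
              exact (hcon (r * s⁻¹) hno r hr s hs).2 rfl
            obtain ⟨r₂, hr₂, hmem⟩ := hrs
            refine ⟨r₂, hr₂, ?_⟩
            have : x * s⁻¹ * r₂⁻¹ = (x * r⁻¹) * (r * s⁻¹ * r₂⁻¹) := by group
            rw [this]
            exact H.mul_mem hxr hmem
        obtain ⟨g', hg'new, r₀, hr₀, s₀, hs₀, hg'eq⟩ := hstep
        have hg'notmem : g' ∉ L := fun h => hg'new g' h (by simpa using H.one_mem)
        have hg'ne1 : g' ≠ 1 := by
          rintro rfl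
          exact hg'new 1 hL1 (by simpa using H.one_mem)
        set L' := L ++ [g'] with hL'def
        have hmemL' : ∀ a : G, a ∈ L' ↔ a ∈ L ∨ a = g' := by
          intro a; simp [hL'def]
        have hidxold : ∀ a ∈ L, L'.idxOf a = L.idxOf a := fun a ha =>
          List.idxOf_append_of_mem ha
        have hidxnew : L'.idxOf g' = L.length := by
          rw [List.idxOf_append_of_notMem hg'notmem]; simp
        refine ih L' (by rw [hmemL']; left; exact hL1) ?_ ?_ ?_
        · intro r₁ h₁ r₂ h₂ hmem
          rw [hmemL'] at h₁ h₂
          rcases h₁ with h₁ | rfl <;> rcases h₂ with h₂ | rfl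
          · exact hLinj r₁ h₁ r₂ h₂ hmem
          · exfalso
            apply hg'new r₁ h₁
            have := H.inv_mem hmem
            rwa [mul_inv_rev, inv_inv] at this
          · exact absurd hmem (hg'new r₂ h₂)
          · rfl
        · intro r hr hrne
          rw [hmemL'] at hr
          rcases hr with hr | rfl
          · obtain ⟨r', hr', s, hs, hcase, hlt⟩ := hLpre r hr hrne
            exact ⟨r', (hmemL' r').mpr (Or.inl hr'), s, hs, hcase,
              by rw [hidxold r' hr', hidxold r hr]; exact hlt⟩
          · refine ⟨r₀, (hmemL' r₀).mpr (Or.inl hr₀), s₀, hs₀, hg'eq, ?_⟩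
            rw [hidxold r₀ hr₀, hidxnew]
            exact List.idxOf_lt_length_iff.mpr hr₀
        · have hsub : Finset.univ.filter
              (fun q : Quotient (QuotientGroup.rightRel H) =>
                ¬ ∃ r ∈ L', Quotient.mk'' r = q) ⊂
              Finset.univ.filter (fun q => ¬ ∃ r ∈ L, Quotient.mk'' r = q) := by
            rw [Finset.ssubset_iff_of_subset]
            · refine ⟨Quotient.mk'' g', ?_, ?_⟩
              · simp only [Finset.mem_filter, Finset.mem_univ, true_and]
                rintro ⟨r, hr, hrg⟩
                have : g' * r⁻¹ ∈ H := by
                  have := Quotient.exact' hrg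
                  rw [QuotientGroup.rightRel_apply] at this
                  exact this
                exact hg'new r hr this
              · simp only [Finset.mem_filter, Finset.mem_univ, true_and, not_not]
                exact ⟨g', (hmemL' g').mpr (Or.inr rfl), rfl⟩
            · intro q hq
              simp only [Finset.mem_filter, Finset.mem_univ, true_and] at hq ⊢
              rintro ⟨r, hr, hrq⟩
              exact hq ⟨r, (hmemL' r).mpr (Or.inl hr), hrq⟩
          have := Finset.card_lt_card hsub
          omega
  exact key (Fintype.card _) [1] (by simp) (by simp +contextual) (by simp) (by
    exact (Finset.card_filter_le _ _).trans (Finset.card_le_univ _))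

end aux

theorem schreier_index_bound {G : Type*} [Group G] (d m : ℕ)
    (hgen : ∃ S : Finset G, S.card ≤ d ∧ Subgroup.closure (S : Set G) = ⊤)
    (H : Subgroup G) (hm : H.index = m) (hmpos : 0 < m) :
    ∃ T : Finset H, T.card ≤ 1 + m * (d - 1) ∧
      Subgroup.closure (T : Set H) = ⊤ := by
  classical
  obtain ⟨S, hSd, hS⟩ := hgen
  haveI : H.FiniteIndex := ⟨by omega⟩
  haveI : Fintype (G ⧸ H) := H.fintypeQuotientOfFiniteIndex
  obtain ⟨L, hL1, hLinj, hLpre, hLall⟩ := exists_schreier_list H S hS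
  set R : Finset G := L.toFinset with hRdef
  have hmemR : ∀ a : G, a ∈ R ↔ a ∈ L := fun a => List.mem_toFinset
  have hR : Subgroup.IsComplement (H : Set G) (R : Set G) := by
    rw [Subgroup.isComplement_iff_existsUnique_mul_inv_mem]
    intro g
    obtain ⟨r, hr, hgr⟩ := hLall g
    refine ⟨⟨r, by simpa using (hmemR r).mpr hr⟩, hgr, ?_⟩
    rintro ⟨r₂, hr₂⟩ h₂
    have hr₂L : r₂ ∈ L := (hmemR r₂).mp (by simpa using hr₂)
    have hkey : r₂ * r⁻¹ ∈ H := by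
      have := H.mul_mem (H.inv_mem h₂) hgr
      rw [mul_inv_rev, inv_inv] at this
      rwa [show r₂ * g⁻¹ * (g * r⁻¹) = r₂ * r⁻¹ by group] at this
    exact Subtype.ext (hLinj r₂ hr₂L r hr hkey)
  have hR1 : (1:G) ∈ R := (hmemR 1).mpr hL1
  -- cardinality of R
  have hcardR : R.card = m := by
    calc R.card = Fintype.card R := (Fintype.card_coe R).symm
      _ = Fintype.card (Quotient (QuotientGroup.rightRel H)) :=
          (Fintype.card_congr (hR.rightQuotientEquiv)).symm
      _ = Fintype.card (G ⧸ H) := QuotientGroup.card_quotient_rightRel H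
      _ = m := by rw [← hm, Subgroup.index_eq_card, Nat.card_eq_fintype_card]
  -- toFun fixes R
  have hfix : ∀ g ∈ R, (hR.toRightFun g : G) = g := by
    intro g hg
    have hEU := Subgroup.isComplement_iff_existsUnique_mul_inv_mem.mp hR g
    have h1 : g * ((⟨g, by simpa using hg⟩ : (R : Set G)) : G)⁻¹ ∈ H := by
      simpa using H.one_mem
    have := hEU.unique (hR.mul_inv_toRightFun_mem g) h1
    exact congrArg Subtype.val this
  -- the generating set from Schreier's lemma
  set T₀ : Finset H := (R * S).image
    (fun g => ⟨g * (hR.toRightFun g : G)⁻¹,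
      hR.mul_inv_toRightFun_mem g⟩) with hT₀def
  have hT₀top : Subgroup.closure (T₀ : Set H) = ⊤ :=
    Subgroup.closure_mul_image_eq_top' hR hR1 hS
  set T : Finset H := T₀.erase 1 with hTdef
  have hTtop : Subgroup.closure (T : Set H) = ⊤ := by
    rw [eq_top_iff, ← hT₀top, Subgroup.closure_le]
    intro t ht
    by_cases h1 : t = 1
    · subst h1; exact (Subgroup.closure (T : Set H)).one_mem
    · refine Subgroup.subset_closure ?_
      rw [hTdef]
      exact Finset.mem_coe.mpr (Finset.mem_erase.mpr ⟨h1, Finset.mem_coe.mp ht⟩)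
  refine ⟨T, ?_, hTtop⟩
  -- counting
  set ℓ : G → ℕ := fun g => L.idxOf g with hℓdef
  set ptriv : Finset (G × G) := (R ×ˢ S).filter (fun p => p.1 * p.2 ∈ R) with hptriv
  set pnon : Finset (G × G) := (R ×ˢ S).filter (fun p => p.1 * p.2 ∉ R) with hpnon
  have hPspec : ∀ r ∈ R.erase 1, ∃ p : G × G, p.1 ∈ R ∧ p.2 ∈ S ∧ p.1 * p.2 ∈ R ∧
      ((p.1 * p.2 = r ∧ ℓ p.1 < ℓ r) ∨ (p.1 = r ∧ ℓ (p.1 * p.2) < ℓ r)) := by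
    intro r hr
    obtain ⟨hrne, hrR⟩ := Finset.mem_erase.mp hr
    obtain ⟨r', hr', s, hs, hcase, hlt⟩ := hLpre r ((hmemR r).mp hrR) hrne
    by_cases hA : r = r' * s
    · exact ⟨(r', s), (hmemR r').mpr hr', hs, by rw [← hA]; exact hrR,
        Or.inl ⟨hA.symm, hlt⟩⟩
    · have hB : r = r' * s⁻¹ := hcase.resolve_left hA
      have hprod : r * s = r' := by rw [hB]; group
      exact ⟨(r, s), hrR, hs, by rw [hprod]; exact (hmemR r').mpr hr',
        Or.inr ⟨rfl, by rw [hprod]; exact hlt⟩⟩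
  set φ : G → G × G := fun r =>
    if h : ∃ p : G × G, p.1 ∈ R ∧ p.2 ∈ S ∧ p.1 * p.2 ∈ R ∧
        ((p.1 * p.2 = r ∧ ℓ p.1 < ℓ r) ∨ (p.1 = r ∧ ℓ (p.1 * p.2) < ℓ r))
    then h.choose else (1, 1) with hφdef
  have hφspec : ∀ r ∈ R.erase 1, (φ r).1 ∈ R ∧ (φ r).2 ∈ S ∧ (φ r).1 * (φ r).2 ∈ R ∧
      (((φ r).1 * (φ r).2 = r ∧ ℓ (φ r).1 < ℓ r) ∨
        ((φ r).1 = r ∧ ℓ ((φ r).1 * (φ r).2) < ℓ r)) := by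
    intro r hr
    have h := hPspec r hr
    simp only [hφdef, dif_pos h]
    exact h.choose_spec
  have hinj : m - 1 ≤ ptriv.card := by
    have := Finset.card_le_card_of_injOn (t := ptriv) φ (fun r hr => by
      obtain ⟨h1, h2, h3, _⟩ := hφspec r hr
      rw [hptriv]
      exact Finset.mem_filter.mpr ⟨Finset.mem_product.mpr ⟨h1, h2⟩, h3⟩)
      (fun r₁ h₁ r₂ h₂ heq => by
        obtain ⟨-, -, -, hc₁⟩ := hφspec r₁ h₁
        obtain ⟨-, -, -, hc₂⟩ := hφspec r₂ h₂
        rw [heq] at hc₁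
        rcases hc₁ with ⟨e₁, l₁⟩ | ⟨e₁, l₁⟩ <;> rcases hc₂ with ⟨e₂, l₂⟩ | ⟨e₂, l₂⟩
        · exact e₁.symm.trans e₂
        · rw [e₂] at e₁ l₁ l₂
          rw [e₁] at l₂
          omega
        · rw [e₁] at e₂ l₂ l₁
          rw [e₂] at l₁
          omega
        · exact e₁.symm.trans e₂)
    rwa [Finset.card_erase_of_mem hR1, hcardR] at this
  have hTsub : T ⊆ pnon.image (fun p =>
      (⟨p.1 * p.2 * (hR.toRightFun (p.1 * p.2) : G)⁻¹,
        hR.mul_inv_toRightFun_mem _⟩ : H)) := by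
    intro t ht
    obtain ⟨htne, htT₀⟩ := Finset.mem_erase.mp ht
    obtain ⟨g, hg, hgt⟩ := Finset.mem_image.mp htT₀
    obtain ⟨r, hr, s, hs, rfl⟩ := Finset.mem_mul.mp hg
    have hnot : r * s ∉ R := by
      intro hmem
      apply htne
      rw [← hgt]
      exact Subtype.ext (by
        show r * s * (↑(hR.toRightFun (r * s)))⁻¹ = ((1 : H) : G)
        rw [hfix _ hmem, mul_inv_cancel, OneMemClass.coe_one])
    exact Finset.mem_image.mpr ⟨(r, s),
      Finset.mem_filter.mpr ⟨Finset.mem_product.mpr ⟨hr, hs⟩, hnot⟩, hgt⟩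
  have hTcard : T.card ≤ pnon.card :=
    le_trans (Finset.card_le_card hTsub) Finset.card_image_le
  have hsplit : ptriv.card + pnon.card = m * S.card := by
    rw [hptriv, hpnon, Finset.card_filter_add_card_filter_not,
      Finset.card_product, hcardR]
  rcases Nat.eq_zero_or_pos d with hd | hd
  · have hSc : S.card = 0 := by omega
    have : m * S.card = 0 := by rw [hSc, Nat.mul_zero]
    omega
  · obtain ⟨k, rfl⟩ : ∃ k, d = k + 1 := ⟨d - 1, by omega⟩
    have h1 : m * S.card ≤ m * (k + 1) := Nat.mul_le_mul_left m hSd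
    have h2 : m * (k + 1) = m * k + m := Nat.mul_succ m k
    have h3 : k + 1 - 1 = k := by omega
    rw [h3]
    omega
end
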